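/- arXiv:2110.12879 — 2 statements merged into one kernel-verified Lean document; each statement's English description precedes it below -/
import Mathlib

section
/- Under the time-elicitation assumption linking consideration times and preferences, the preference system produced by time elicitation after presenting all pairs equals the decision maker's true preference system [A, R₁*, R₂*]. -/
variable {A : Type*}

theorem stmt5 [Fintype A]
    (R1s : A → A → Prop) (R2s : A × A → A × A → Prop)
    (t : A → A → ℝ) (cinf : ℝ)
    (hrefl : ∀ a, R1s a a)
    (hdom : ∀ p q, R2s p q → R1s p.1 p.2 ∧ R1s q.1 q.2)
    (htP : ∀ a b, R1s a b → ¬ R1s b a → 0 < t a b ∧ t b a = 0)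
    (htI : ∀ a b, R1s a b → R1s b a → t a b = cinf ∧ t b a = cinf)
    (htC : ∀ a b, ¬ R1s a b → ¬ R1s b a → t a b = 0)
    (hbound : ∀ a b, R1s a b → ¬ R1s b a → t a b < cinf)
    (has1 : ∀ a b d e, R1s a b → R1s d e →
      ((t a b < t d e ∧ 0 < t a b) ↔ (R2s (a, b) (d, e) ∧ ¬ R2s (d, e) (a, b))) ∧
      ((t a b = t d e ∧ 0 < t a b) ↔ (R2s (a, b) (d, e) ∧ R2s (d, e) (a, b))))
    (has1iii : ∀ a b, (t a b = cinf ∧ t b a = cinf) ↔ (R1s a b ∧ R1s b a)) :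
    ∀ p q : A × A, R2s p q ↔
      (R1s p.1 p.2 ∧ R1s q.1 q.2 ∧ 0 ≤ t q.1 q.2 - t p.1 p.2 ∧ 0 < t p.1 p.2) := by
  intro p q
  obtain ⟨a, b⟩ := p
  obtain ⟨d, e⟩ := q
  constructor
  · intro h
    obtain ⟨h1, h2⟩ := hdom _ _ h
    refine ⟨h1, h2, ?_⟩
    obtain ⟨hlt, heq⟩ := has1 a b d e h1 h2
    by_cases hqp : R2s (d, e) (a, b)
    · obtain ⟨he, hp⟩ := heq.mpr ⟨h, hqp⟩
      exact ⟨by simp [he], hp⟩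
    · obtain ⟨he, hp⟩ := hlt.mpr ⟨h, hqp⟩
      exact ⟨by linarith, hp⟩
  · rintro ⟨h1, h2, hle, hp⟩
    obtain ⟨hlt, heq⟩ := has1 a b d e h1 h2
    rcases lt_or_eq_of_le (by linarith : t a b ≤ t d e) with hc | hc
    · exact (hlt.mp ⟨hc, hp⟩).1
    · exact (heq.mp ⟨hc, hp⟩).1
end

section
/- Let A = {a₁,...,a₈} with a strict partial order R₁ whose strict part contains (a₈,a₇), (a₆,a₅), (a₃,a₁), (a₄,a₂), and a cardinal relation R₂ whose strict part contains ((a₃,a₁),(a₄,a₂)) and ((a₈,a₇),(a₆,a₅)). Let π be the uniform distribution on four states and X₁, X₂ acts with X₁ = (a₈,a₅,a₂,a₃) and X₂ = (a₇,a₆,a₄,a₁). Then for every utility function u : A → [0,1] weakly representing [A,R₁,R₂], E_π(u∘X₁) > E_π(u∘X₂). -/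
variable {A : Type*}

/-- `u` weakly represents the preference system `[A, R1, R2]`. -/
def Represents (R1 : A → A → Prop) (R2 : A × A → A × A → Prop) (u : A → ℝ) : Prop :=
  (∀ a, u a ∈ Set.Icc (0 : ℝ) 1) ∧
  (∀ a b, R1 a b → u b ≤ u a ∧ (u a = u b ↔ R1 b a)) ∧
  (∀ p q, R2 p q → u q.1 - u q.2 ≤ u p.1 - u p.2 ∧
    (u p.1 - u p.2 = u q.1 - u q.2 ↔ R2 q p))

theorem stmt16 (R1 : A → A → Prop) (R2 : A × A → A × A → Prop)
    (a1 a2 a3 a4 a5 a6 a7 a8 : A)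
    (h87 : R1 a8 a7 ∧ ¬ R1 a7 a8) (h65 : R1 a6 a5 ∧ ¬ R1 a5 a6)
    (h31 : R1 a3 a1 ∧ ¬ R1 a1 a3) (h42 : R1 a4 a2 ∧ ¬ R1 a2 a4)
    (hc1 : R2 (a3, a1) (a4, a2) ∧ ¬ R2 (a4, a2) (a3, a1))
    (hc2 : R2 (a8, a7) (a6, a5) ∧ ¬ R2 (a6, a5) (a8, a7)) :
    ∀ u : A → ℝ, Represents R1 R2 u →
      (u a7 + u a6 + u a4 + u a1) / 4 < (u a8 + u a5 + u a2 + u a3) / 4 := by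
  intro u ⟨_, _, hR2⟩
  have h1 := hR2 _ _ hc1.1
  have h2 := hR2 _ _ hc2.1
  simp only at h1 h2
  have e1 : u a4 - u a2 < u a3 - u a1 :=
    lt_of_le_of_ne h1.1 (fun h => hc1.2 (h1.2.mp h.symm))
  have e2 : u a6 - u a5 < u a8 - u a7 :=
    lt_of_le_of_ne h2.1 (fun h => hc2.2 (h2.2.mp h.symm))
  linarith
end
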